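/- arXiv:2303.04780 — 2 statements merged into one kernel-verified Lean document; each statement's English description precedes it below -/
import Mathlib

section
/- Fix d ∈ {1,2,4,8} and integers p ≥ 2, q ≥ 1, and set ρ = (d(p+q)−2)/2. Define P(s) = Γ((s+ρ)/2)·Γ((−s+ρ)/2) / (Γ(s)·Γ(−s)·sin(π(s+dp−ρ)/2)·sin(π(s+dq−ρ)/2)). Then P is regular (extends holomorphically) at every point of the imaginary axis s ∈ iℝ \ {0}, and at s = 0. -/
/-!
With `a = dp - ρ` one has `dq - ρ = 2 - a`, so the reflection formula
`Γ(s)Γ(-s) = -π / (s sin πs)` and a product-to-sum identity turn the density into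
`P(s) = Γ((s+ρ)/2) Γ((-s+ρ)/2) · 2s sin πs / (π (cos πa - cos πs))`.
On `iℝ \ {0}` the denominator is nonzero because `cos πa ≤ 1 < cosh πt = cos(πit)`, and the
Gamma factors have arguments off the real axis. At `s = 0` the Gamma factors are regular since
`ρ/2` is not a nonpositive integer; if `cos πa ≠ 1` nothing more is needed, and if `cos πa = 1`
the quotient `s sin πs / (1 - cos πs) = (1 + cos πs) · Γ(1+s)Γ(1-s) / π` is regular as well.
-/

open Filter Complex Topology
open scoped Real

theorem Complex.analyticAt_Gamma {z : ℂ} (hz : ∀ m : ℕ, z ≠ -m) : AnalyticAt ℂ Gamma z := by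
  simpa using (differentiable_one_div_Gamma.analyticAt z).fun_inv (by simpa using Gamma_ne_zero hz)

theorem AnalyticAt.cGamma {f : ℂ → ℂ} {z : ℂ} (hf : AnalyticAt ℂ f z) (h : ∀ m : ℕ, f z ≠ -m) :
    AnalyticAt ℂ (fun s => Gamma (f s)) z :=
  (analyticAt_Gamma h).comp hf

theorem Complex.Gamma_mul_Gamma_neg (s : ℂ) : Gamma s * Gamma (-s) = -π / (s * sin (π * s)) := by
  rcases eq_or_ne s 0 with rfl | hs
  · simp
  have h := Gamma_mul_Gamma_one_sub s
  rw [sub_eq_neg_add, Gamma_add_one _ (neg_ne_zero.2 hs)] at h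
  rw [neg_div, mul_comm s, ← div_div, ← h]
  field_simp

theorem Complex.Gamma_one_add_mul_Gamma_one_sub {s : ℂ} (hs : s ≠ 0) :
    Gamma (1 + s) * Gamma (1 - s) = π * s / sin (π * s) := by
  rw [add_comm, Gamma_add_one _ hs, mul_assoc, Gamma_mul_Gamma_one_sub]
  ring

theorem Complex.sin_div_one_sub_cos (x : ℂ) : sin x / (1 - cos x) = (1 + cos x) / sin x := by
  by_cases hs : sin x = 0
  · simp [hs]
  have hc : 1 - cos x ≠ 0 := fun hc => hs (by
    have := sin_sq_add_cos_sq x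
    rw [← sub_eq_zero.1 hc] at this
    simpa using this)
  rw [div_eq_div_iff hc hs]
  linear_combination sin_sq_add_cos_sq x

theorem Complex.sin_mul_sin_of_add_eq_two {a b : ℂ} (hab : a + b = 2) (s : ℂ) :
    sin (π * (s + a) / 2) * sin (π * (s + b) / 2) = (cos (π * s) - cos (π * a)) / 2 := by
  obtain rfl : b = 2 - a := by linear_combination hab
  rw [show π * (s + (2 - a)) / 2 = π * (s - a) / 2 + π by ring, sin_add_pi, cos_sub_cos]
  ring_nf

noncomputable def reflectedPlancherelDensity (ρ a s : ℂ) : ℂ :=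
  Gamma ((s + ρ) / 2) * Gamma ((-s + ρ) / 2) * (2 * s * sin (π * s)) /
    (π * (cos (π * a) - cos (π * s)))

/-- Valid for every `s`: where `s sin πs = 0` both sides vanish by the convention `x / 0 = 0`. -/
theorem plancherel_density_eq {ρ x y : ℂ} (h : x + y = 2 * ρ + 2) (s : ℂ) :
    Gamma ((s + ρ) / 2) * Gamma ((-s + ρ) / 2) /
        (Gamma s * Gamma (-s) * sin (π * (s + x - ρ) / 2) * sin (π * (s + y - ρ) / 2)) =
      reflectedPlancherelDensity ρ (x - ρ) s := by
  rw [add_sub_assoc, add_sub_assoc, mul_assoc, sin_mul_sin_of_add_eq_two (by linear_combination h),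
    Gamma_mul_Gamma_neg, reflectedPlancherelDensity, div_mul_div_comm, div_div_eq_mul_div]
  ring

theorem analyticAt_reflectedPlancherelDensity {ρ a z : ℂ} (h₁ : ∀ m : ℕ, (z + ρ) / 2 ≠ -m)
    (h₂ : ∀ m : ℕ, (-z + ρ) / 2 ≠ -m) (hcos : cos (π * a) ≠ cos (π * z)) :
    AnalyticAt ℂ (reflectedPlancherelDensity ρ a) z := by
  have hΓ₁ : AnalyticAt ℂ (fun s => Gamma ((s + ρ) / 2)) z :=
    (by fun_prop : AnalyticAt ℂ (fun s => (s + ρ) / 2) z).cGamma h₁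
  have hΓ₂ : AnalyticAt ℂ (fun s => Gamma ((-s + ρ) / 2)) z :=
    (by fun_prop : AnalyticAt ℂ (fun s => (-s + ρ) / 2) z).cGamma h₂
  exact ((hΓ₁.mul hΓ₂).mul (by fun_prop)).div (by fun_prop)
    (mul_ne_zero (ofReal_ne_zero.2 Real.pi_ne_zero) (sub_ne_zero.2 hcos))

theorem analyticAt_reflectedPlancherelDensity_ofReal_mul_I {ρ a t : ℝ} (ht : t ≠ 0) :
    AnalyticAt ℂ (reflectedPlancherelDensity ρ a) (t * I) := by
  have hpole : ∀ w : ℂ, w.im ≠ 0 → ∀ m : ℕ, (w + ρ) / 2 ≠ -m := fun w hw m h =>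
    hw (by simpa using congrArg im h)
  refine analyticAt_reflectedPlancherelDensity (hpole _ (by simpa using ht))
    (hpole _ (by simpa using ht)) ?_
  rw [← mul_assoc, ← ofReal_mul, cos_mul_I, ← ofReal_mul, ← ofReal_cos, ← ofReal_cosh, Ne,
    ofReal_inj]
  exact ((Real.cos_le_one _).trans_lt (Real.one_lt_cosh.2 (mul_ne_zero Real.pi_ne_zero ht))).ne

theorem analyticAt_reflectedPlancherelDensity_zero {ρ a : ℂ} (hρ : ∀ m : ℕ, ρ / 2 ≠ -m)
    (ha : cos (π * a) ≠ 1) : AnalyticAt ℂ (reflectedPlancherelDensity ρ a) 0 :=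
  analyticAt_reflectedPlancherelDensity (by simpa using hρ) (by simpa using hρ) (by simpa using ha)

theorem reflectedPlancherelDensity_eq_of_cos_eq_one {ρ a s : ℂ} (ha : cos (π * a) = 1)
    (hs : s ≠ 0) :
    reflectedPlancherelDensity ρ a s = Gamma ((s + ρ) / 2) * Gamma ((-s + ρ) / 2) *
      (2 * (1 + cos (π * s)) * (Gamma (1 + s) * Gamma (1 - s))) / π ^ 2 := by
  calc reflectedPlancherelDensity ρ a s
      = Gamma ((s + ρ) / 2) * Gamma ((-s + ρ) / 2) * (2 * s / π) *
          (sin (π * s) / (1 - cos (π * s))) := by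
        rw [reflectedPlancherelDensity, ha]; simp only [div_eq_mul_inv, mul_inv]; ring
    _ = Gamma ((s + ρ) / 2) * Gamma ((-s + ρ) / 2) *
          (2 * (1 + cos (π * s)) * (π * s / sin (π * s))) / π ^ 2 := by
        rw [sin_div_one_sub_cos]; field_simp
    _ = _ := by rw [Gamma_one_add_mul_Gamma_one_sub hs]

theorem exists_analyticAt_eq_reflectedPlancherelDensity_of_cos_eq_one {ρ a : ℂ}
    (hρ : ∀ m : ℕ, ρ / 2 ≠ -m) (ha : cos (π * a) = 1) :
    ∃ g : ℂ → ℂ, AnalyticAt ℂ g 0 ∧ ∀ᶠ s in 𝓝[≠] 0, reflectedPlancherelDensity ρ a s = g s := by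
  refine ⟨_, ?_, eventually_nhdsWithin_of_forall fun s hs =>
    reflectedPlancherelDensity_eq_of_cos_eq_one ha hs⟩
  have hone : ∀ m : ℕ, (1 : ℂ) ≠ -m := fun m => by exact_mod_cast (by omega : (1 : ℤ) ≠ -m)
  have hΓ₁ : AnalyticAt ℂ (fun s => Gamma ((s + ρ) / 2)) 0 :=
    (by fun_prop : AnalyticAt ℂ (fun s => (s + ρ) / 2) 0).cGamma (by simpa using hρ)
  have hΓ₂ : AnalyticAt ℂ (fun s => Gamma ((-s + ρ) / 2)) 0 :=
    (by fun_prop : AnalyticAt ℂ (fun s => (-s + ρ) / 2) 0).cGamma (by simpa using hρ)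
  have hΓ₃ : AnalyticAt ℂ (fun s => Gamma (1 + s)) 0 :=
    (by fun_prop : AnalyticAt ℂ (fun s : ℂ => 1 + s) 0).cGamma (by simpa using hone)
  have hΓ₄ : AnalyticAt ℂ (fun s => Gamma (1 - s)) 0 :=
    (by fun_prop : AnalyticAt ℂ (fun s : ℂ => 1 - s) 0).cGamma (by simpa using hone)
  have hcos : AnalyticAt ℂ (fun s : ℂ => 2 * (1 + cos (π * s))) 0 := by fun_prop
  exact ((hΓ₁.mul hΓ₂).mul (hcos.mul (hΓ₃.mul hΓ₄))).div analyticAt_const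
    (by simp [Real.pi_ne_zero])

theorem plancherel_density_regular_on_imaginary_axis_general
    (d p q : ℕ) (hp : 2 ≤ p) (hq : 1 ≤ q)
    (ρ : ℝ) (hρ : ρ = ((d : ℝ) * (p + q) - 2) / 2) :
    ∀ t : ℝ, ∃ g : ℂ → ℂ, AnalyticAt ℂ g ((t : ℂ) * Complex.I) ∧
      ∀ᶠ s in nhdsWithin ((t : ℂ) * Complex.I) {(t : ℂ) * Complex.I}ᶜ,
        Complex.Gamma ((s + ρ) / 2) * Complex.Gamma ((-s + ρ) / 2) /
          (Complex.Gamma s * Complex.Gamma (-s) *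
            Complex.sin ((Real.pi : ℂ) * (s + (d : ℂ) * p - ρ) / 2) *
            Complex.sin ((Real.pi : ℂ) * (s + (d : ℂ) * q - ρ) / 2)) = g s := by
  have hsum : (d : ℂ) * p + d * q = 2 * ρ + 2 := by rw [hρ]; push_cast; ring
  have hpole : ∀ m : ℕ, (ρ : ℂ) / 2 ≠ -m := by
    intro m h
    have h' : d * (p + q) + 4 * m = 2 := by
      have : ρ / 2 = -m := by exact_mod_cast h
      rw [hρ] at this
      exact_mod_cast (by linarith : (d : ℝ) * (p + q) + 4 * m = 2)
    rcases Nat.eq_zero_or_pos d with rfl | hd_pos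
    · omega
    · nlinarith
  have ha : (d : ℂ) * p - ρ = ((d * p - ρ : ℝ) : ℂ) := by push_cast; ring
  simp only [plancherel_density_eq hsum, ha]
  intro t
  rcases eq_or_ne t 0 with rfl | ht
  · rw [ofReal_zero, zero_mul]
    by_cases hcos : cos (π * ((d * p - ρ : ℝ) : ℂ)) = 1
    · exact exists_analyticAt_eq_reflectedPlancherelDensity_of_cos_eq_one hpole hcos
    · exact ⟨_, analyticAt_reflectedPlancherelDensity_zero hpole hcos, .of_forall fun _ => rfl⟩
  · exact ⟨_, analyticAt_reflectedPlancherelDensity_ofReal_mul_I ht, .of_forall fun _ => rfl⟩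

/-- The Plancherel density
`P(s) = Γ((s+ρ)/2)Γ((-s+ρ)/2) / (Γ(s)Γ(-s) sin(π(s+dp-ρ)/2) sin(π(s+dq-ρ)/2))`
extends holomorphically to every point of the imaginary axis (including `s = 0`). -/
theorem plancherel_density_regular_on_imaginary_axis
    (d p q : ℕ) (hd : d = 1 ∨ d = 2 ∨ d = 4 ∨ d = 8) (hp : 2 ≤ p) (hq : 1 ≤ q)
    (ρ : ℝ) (hρ : ρ = ((d : ℝ) * (p + q) - 2) / 2) :
    ∀ t : ℝ, ∃ g : ℂ → ℂ, AnalyticAt ℂ g ((t : ℂ) * Complex.I) ∧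
      ∀ᶠ s in nhdsWithin ((t : ℂ) * Complex.I) {(t : ℂ) * Complex.I}ᶜ,
        Complex.Gamma ((s + ρ) / 2) * Complex.Gamma ((-s + ρ) / 2) /
          (Complex.Gamma s * Complex.Gamma (-s) *
            Complex.sin ((Real.pi : ℂ) * (s + (d : ℂ) * p - ρ) / 2) *
            Complex.sin ((Real.pi : ℂ) * (s + (d : ℂ) * q - ρ) / 2)) = g s :=
  plancherel_density_regular_on_imaginary_axis_general d p q hp hq ρ hρ
end

section
/- Define β(s) = (−1)^m·((s−ρ)/2)((s−ρ)/2 − 1)⋯((s−ρ)/2 − (m+ℓ)/2 + 1) / (Γ(m + dq/2)·Γ((s−ρ+ℓ−m+dp)/2)) for ℓ, m ∈ ℕ with ℓ ≡ m mod 2, d ∈ {1,2,4,8}, p ≥ 2, q ≥ 1, ρ = (d(p+q)−2)/2. Then for d = 1 and s = ρ + 2k with k ∈ ℕ: β(s) = 0 if and only if ℓ + m > 2k or m − ℓ ≥ 2k + p. -/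
/-!
At `s = ρ + 2k` the numerator is the descending product `k (k - 1) ⋯ (k - (m + ℓ)/2 + 1)`, which
vanishes iff `k < (m + ℓ)/2`, i.e. (by the parity assumption) iff `2k < ℓ + m`. The factor
`Γ(m + q/2)` is nonzero since its argument has positive real part. Mathlib's `Γ` takes the value `0` at its poles,
so dividing by `Γ((2k + ℓ - m + p)/2)` models multiplying by `1/Γ`, which vanishes iff
`2k + ℓ - m + p` is a nonpositive even integer. The evenness is automatic: if `m - ℓ ≥ 2k + p` and
`ℓ + m ≤ 2k`, then `ℓ = p = 0`.
-/

theorem prod_range_natCast_sub_eq_zero_iff {R : Type*} [CommRing R] [CharZero R] (k n : ℕ) :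
    ∏ j ∈ Finset.range n, ((k : R) - j) = 0 ↔ k < n := by
  rw [← descPochhammer_eval_eq_prod_range, descPochhammer_eval_eq_descFactorial, Nat.cast_eq_zero,
    Nat.descFactorial_eq_zero_iff_lt]

theorem Complex.Gamma_intCast_div_two_eq_zero_iff (z : ℤ) :
    Complex.Gamma (z / 2) = 0 ↔ z ≤ 0 ∧ Even z := by
  rw [Complex.Gamma_eq_zero_iff]
  constructor
  · rintro ⟨n, hn⟩
    have hz : z = -(2 * n : ℤ) := by
      rw [div_eq_iff two_ne_zero] at hn
      exact_mod_cast (show (z : ℂ) = ((-(2 * n : ℤ) : ℤ) : ℂ) by rw [hn]; push_cast; ring)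
    exact ⟨by omega, ⟨-n, by omega⟩⟩
  · rintro ⟨hz, n, rfl⟩
    refine ⟨(-n).toNat, ?_⟩
    rw [show (((-n).toNat : ℕ) : ℂ) = ((-n : ℤ) : ℂ) by exact_mod_cast Int.toNat_of_nonneg (by omega)]
    push_cast
    ring

theorem Complex.Gamma_natCast_add_div_two_ne_zero (m : ℕ) {q : ℕ} (hq : 1 ≤ q) :
    Complex.Gamma ((m : ℂ) + (q : ℂ) / 2) ≠ 0 := by
  apply Complex.Gamma_ne_zero_of_re_pos
  have : (1 : ℝ) ≤ q := by exact_mod_cast hq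
  simp only [Complex.add_re, Complex.natCast_re, Complex.div_ofNat_re]
  positivity

theorem beta_coefficient_zeros_general (p q ℓ m k : ℕ) (hq : 1 ≤ q)
    (hparity : ℓ % 2 = m % 2) (ρ : ℝ)
    (s : ℂ) (hs : s = (ρ : ℂ) + 2 * k) (β : ℂ)
    (hβ : β = (-1 : ℂ) ^ m *
        (∏ i ∈ Finset.range ((m + ℓ) / 2), ((s - ρ) / 2 - i)) /
        (Complex.Gamma ((m : ℂ) + (q : ℂ) / 2) *
          Complex.Gamma ((s - ρ + ℓ - m + p) / 2))) :
    β = 0 ↔ (2 * k < ℓ + m ∨ (m : ℤ) - (ℓ : ℤ) ≥ 2 * k + p) := by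
  have hhalf : (s - ρ) / 2 = k := by rw [hs]; ring
  have hpole : (s - ρ + ℓ - m + p) / 2 = ((2 * k + ℓ - m + p : ℤ) : ℂ) / 2 := by
    rw [hs]; push_cast; ring
  rw [hβ, hhalf, hpole, div_eq_zero_iff, mul_eq_zero, mul_eq_zero,
    prod_range_natCast_sub_eq_zero_iff, Complex.Gamma_intCast_div_two_eq_zero_iff, Int.even_iff]
  simp only [pow_eq_zero_iff', neg_eq_zero, one_ne_zero, false_and, false_or,
    Complex.Gamma_natCast_add_div_two_ne_zero m hq]
  omega

/-- Zeros of the spectral coefficient `β_{ℓ,m}(s)` for `d = 1` at `s = ρ + 2k`: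
`β(s) = 0` iff `ℓ + m > 2k` or `m - ℓ ≥ 2k + p`. -/
theorem beta_coefficient_zeros (p q ℓ m k : ℕ) (hp : 2 ≤ p) (hq : 1 ≤ q)
    (hparity : ℓ % 2 = m % 2) (ρ : ℝ) (hρ : ρ = ((p : ℝ) + q - 2) / 2)
    (s : ℂ) (hs : s = (ρ : ℂ) + 2 * k) (β : ℂ)
    (hβ : β = (-1 : ℂ) ^ m *
        (∏ i ∈ Finset.range ((m + ℓ) / 2), ((s - ρ) / 2 - i)) /
        (Complex.Gamma ((m : ℂ) + (q : ℂ) / 2) *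
          Complex.Gamma ((s - ρ + ℓ - m + p) / 2))) :
    β = 0 ↔ (2 * k < ℓ + m ∨ (m : ℤ) - (ℓ : ℤ) ≥ 2 * k + p) :=
  beta_coefficient_zeros_general p q ℓ m k hq hparity ρ s hs β hβ
end
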